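/- Let n ≥ 7 be odd. The complementary-left-right majority network on n nodes solves the density classification task, and every configuration converges to the correct homogeneous fixed point within at most 4 iterations. -/

import Mathlib

/-!
Every node misses exactly two nodes, so for `n = 2m + 1` the network has no ties: a node becomes
`1` iff at least `m` of the nodes it sees are `1`. Hence `m + 2` ones lead to all ones in one step,
and from exactly `m + 1` ones a node becomes `0` iff both nodes it misses are `1`. The pairs missed
by the `U`-nodes (resp. `R`-nodes) are the adjacent pairs of the cycle `S` (resp. `T`), and `S`, `T`
partition the nodes. A cycle has at most as many adjacent `11`-pairs as ones, with equality only if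
it is constant, and `T` cannot be constant here; so the number of ones never drops below `m + 1`,
and it stays at `m + 1` only if `S` is constant. Following the nodes `0`, `1` and the last cells of
`T` shows that it cannot stay at `m + 1` for three steps in a row. A majority of zeros is handled
by complementing, which commutes with every majority network.
-/

/-- Number of `true` entries of `x` inside the finite set `S`. -/
def onesIn {V : Type*} [DecidableEq V] (S : Finset V) (x : V → Bool) : ℕ :=
  (S.filter (fun v => x v = true)).card

/-- Total number of ones in a configuration. -/
def ones {V : Type*} [Fintype V] [DecidableEq V] (x : V → Bool) : ℕ :=
  onesIn Finset.univ x

/-- Total number of zeros in a configuration. -/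
def zeros {V : Type*} [Fintype V] [DecidableEq V] (x : V → Bool) : ℕ :=
  (Finset.univ.filter (fun v => x v = false)).card

/-- One synchronous step of the majority Boolean automata network with
in-neighborhoods `N`: each node takes the majority state among its
in-neighbors, keeping its current state in case of a tie. -/
def majStep {V : Type*} [Fintype V] [DecidableEq V]
    (N : V → Finset V) (x : V → Bool) : V → Bool :=
  fun v =>
    if (N v).card < 2 * onesIn (N v) x then true
    else if 2 * onesIn (N v) x < (N v).card then false
    else x v

/-- In-neighborhoods of the complementary-left-right digraph.
With h = ⌊n/2⌋: U = (0,2,...,h-1), R = (1,h,...,n-1), S = (0,...,h-2)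
(so S_j = j, |S| = h-1), T = (h-1,...,n-1) (so T_j = h-1+j, |T| = h+2).
Node U_i sees V minus {S_((i+1) mod |S|), S_((i+2) mod |S|)};
node R_i sees V minus {T_((i-1) mod |T|), T_((i-2) mod |T|)}. -/
def clrN (n : ℕ) (v : Fin n) : Finset (Fin n) :=
  let h := n / 2
  let sLen := h - 1
  let tLen := h + 2
  if v.val = 0 ∨ (2 ≤ v.val ∧ v.val ≤ h - 1) then
    -- v = U_i with i = 0 if v = 0, else i = v - 1
    let i := if v.val = 0 then 0 else v.val - 1
    Finset.univ.filter (fun u : Fin n =>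
      u.val ≠ (i + 1) % sLen ∧ u.val ≠ (i + 2) % sLen)
  else
    -- v = R_i with i = 0 if v = 1, else i = v - h + 1
    let i := if v.val = 1 then 0 else v.val - h + 1
    Finset.univ.filter (fun u : Fin n =>
      u.val ≠ h - 1 + (i + tLen - 1) % tLen ∧
      u.val ≠ h - 1 + (i + tLen - 2) % tLen)

open Finset Function

section Majority

variable {V : Type*} [Fintype V] [DecidableEq V]

lemma ones_add_zeros (x : V → Bool) : ones x + zeros x = Fintype.card V := by
  simpa [ones, zeros, onesIn] using card_filter_add_card_filter_not (s := univ) (x · = true)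

lemma ones_not (x : V → Bool) : ones (fun v => !x v) = zeros x := by
  simp [ones, zeros, onesIn]

lemma zeros_not (x : V → Bool) : zeros (fun v => !x v) = ones x := by
  simp [ones, zeros, onesIn]

lemma majStep_not (N : V → Finset V) (x : V → Bool) :
    majStep N (fun v => !x v) = fun v => !majStep N x v := by
  funext v
  have hsplit : onesIn (N v) (fun u => !x u) + onesIn (N v) x = #(N v) := by
    simpa [onesIn, add_comm] using card_filter_add_card_filter_not (s := N v) (x · = true)
  unfold majStep
  split_ifs <;> first | rfl | omega

lemma commute_not_majStep (N : V → Finset V) :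
    Function.Commute (fun x : V → Bool => fun v => !x v) (majStep N) :=
  fun x => (majStep_not N x).symm

lemma onesIn_sdiff_pair_add {a b : V} (hab : a ≠ b) (x : V → Bool) :
    onesIn (univ \ {a, b}) x + (x a).toNat + (x b).toNat = ones x := by
  have hsum (s : Finset V) : onesIn s x = ∑ v ∈ s, (x v).toNat := by
    rw [onesIn, card_filter]
    exact sum_congr rfl fun v _ => by cases x v <;> rfl
  rw [ones, hsum, hsum, add_assoc, ← sum_pair hab (f := fun v => (x v).toNat),
    sum_sdiff (subset_univ _)]

variable {N : V → Finset V} {x : V → Bool} {v a b : V} {m : ℕ}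

lemma card_sdiff_pair_add_two (hV : Fintype.card V = 2 * m + 1) (hab : a ≠ b) :
    #(univ \ {a, b}) + 2 = 2 * m + 1 := by
  have h2 := card_le_univ ({a, b} : Finset V)
  rw [card_pair hab] at h2
  rw [card_sdiff_of_subset (subset_univ _), card_pair hab, card_univ]
  omega

lemma majStep_apply_eq_true (hV : Fintype.card V = 2 * m + 1) (hab : a ≠ b)
    (hN : N v = univ \ {a, b}) (hx : m + 2 ≤ ones x) : majStep N x v = true := by
  have hsplit := onesIn_sdiff_pair_add hab x
  have hcard := card_sdiff_pair_add_two hV hab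
  have ha := Bool.toNat_le (x a)
  have hb := Bool.toNat_le (x b)
  rw [majStep, hN, if_pos (by omega)]

lemma majStep_apply_of_ones_eq (hV : Fintype.card V = 2 * m + 1) (hab : a ≠ b)
    (hN : N v = univ \ {a, b}) (hx : ones x = m + 1) : majStep N x v = !(x a && x b) := by
  have hsplit := onesIn_sdiff_pair_add hab x
  have hcard := card_sdiff_pair_add_two hV hab
  rw [majStep, hN]
  cases ha : x a <;> cases hb : x b <;>
    simp only [ha, hb, Bool.toNat_true, Bool.toNat_false] at hsplit <;>
    split_ifs <;> first | rfl | omega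

end Majority

section Counting

lemma card_filter_eq_add_of_bijective {α β V : Type*} [Fintype α] [Fintype β] [Fintype V]
    {f : α → V} {f' : β → V} (h : Bijective (Sum.elim f f')) (p : V → Prop)
    [DecidablePred p] : #{v | p v} = #{a | p (f a)} + #{b | p (f' b)} := by
  simp only [card_filter]
  rw [← h.sum_comp, Fintype.sum_sum_type]
  rfl

variable {V : Type*} [Fintype V] [DecidableEq V] {g : V → Bool}

lemma eq_false_of_ones_le_two (h : ones g ≤ 2) {a b c : V} (ha : g a) (hb : g b) (hab : a ≠ b)
    (hca : c ≠ a) (hcb : c ≠ b) : g c = false := by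
  by_contra hc
  have : 2 < ones g := two_lt_card.2
    ⟨a, by simpa using ha, b, by simpa using hb, c, by simpa using hc, hab, hca.symm, hcb.symm⟩
  omega

lemma eq_true_of_zeros_le_one (h : zeros g ≤ 1) {a c : V} (ha : g a = false) (hca : c ≠ a) :
    g c = true := by
  by_contra hc
  exact hca (card_le_one.1 h c (by simpa using hc) a (by simpa using ha))

end Counting

namespace ZMod

lemma val_add_natCast {L : ℕ} [NeZero L] (i : ZMod L) (c : ℕ) :
    (i + c).val = (i.val + c) % L := by
  rw [val_add, val_natCast, Nat.add_mod_mod]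

lemma val_sub_natCast {L : ℕ} [NeZero L] (i : ZMod L) {c : ℕ} (hc : c ≤ L) :
    (i - c).val = (i.val + (L - c)) % L := by
  rw [← val_add_natCast, Nat.cast_sub hc, natCast_self, zero_sub, sub_eq_add_neg]

lemma natCast_ne_natCast {L c d : ℕ} (hc : c < L) (hd : d < L) (h : c ≠ d) :
    (c : ZMod L) ≠ d := by
  rwa [Ne, natCast_eq_natCast_iff' c d L, Nat.mod_eq_of_lt hc, Nat.mod_eq_of_lt hd]

end ZMod

section Cycle

variable {L : ℕ} [NeZero L]

def pairCount (g : ZMod L → Bool) : ℕ := #{i | g i ∧ g (i + 1)}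

lemma pairCount_comp_add (g : ZMod L → Bool) (c : ZMod L) :
    pairCount (fun i => g (i + c)) = pairCount g :=
  card_equiv (Equiv.addRight c) fun i => by simp [add_right_comm]

lemma pairCount_le_ones (g : ZMod L → Bool) : pairCount g ≤ ones g :=
  card_le_card fun i => by simp +contextual

lemma eq_true_of_forall_imp_add_one {g : ZMod L → Bool} (hg : ∀ i, g i → g (i + 1))
    {i : ZMod L} (hi : g i) (j : ZMod L) : g j := by
  have key (c : ℕ) : g (i + c) := by
    induction c with
    | zero => simpa using hi
    | succ c ih => simpa [add_assoc] using hg _ ih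
  simpa using key (j - i).val

lemma apply_eq_of_pairCount_eq {g : ZMod L → Bool} (h : pairCount g = ones g) (i j : ZMod L) :
    g i = g j := by
  have hsub : ({i | g i ∧ g (i + 1)} : Finset (ZMod L)) ⊆ ({i | g i} : Finset (ZMod L)) :=
    fun i => by simp +contextual
  have heq := eq_of_subset_of_card_le hsub h.ge
  have hg (i : ZMod L) (hi : g i) : g (i + 1) := by
    have hmem : i ∈ ({i | g i} : Finset (ZMod L)) := by simpa using hi
    rw [← heq, mem_filter] at hmem
    exact hmem.2.2
  cases hgi : g i <;> cases hgj : g j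
  all_goals first
    | rfl
    | simp [eq_true_of_forall_imp_add_one hg hgi j] at hgj
    | simp [eq_true_of_forall_imp_add_one hg hgj i] at hgi

lemma pairCount_lt_ones {g : ZMod L → Bool} (hpos : 0 < ones g) (hlt : ones g < L) :
    pairCount g < ones g := by
  refine lt_of_le_of_ne (pairCount_le_ones g) fun h => ?_
  have hconst : g = fun _ => g 0 := funext fun i => apply_eq_of_pairCount_eq h i 0
  rw [hconst] at hpos hlt
  cases h0 : g 0 <;> simp [h0, ones, onesIn, ZMod.card] at hpos hlt

end Cycle

namespace CLR

variable {k : ℕ}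

/- With `n = 2k + 7` (so `m = ⌊n/2⌋ = k + 3` and `m + 1 = k + 4`), these are the paper's `S_j`,
`T_j`, `U_i`, `R_j`: the cycles `S`, `T` have lengths `k + 2`, `k + 5` and partition the nodes, as
do `U` and `R`. -/

def sCell (j : ZMod (k + 2)) : Fin (2 * k + 7) := ⟨j.val, by have := j.val_lt; omega⟩

def tCell (j : ZMod (k + 5)) : Fin (2 * k + 7) := ⟨k + 2 + j.val, by have := j.val_lt; omega⟩

def uNode (i : ZMod (k + 2)) : Fin (2 * k + 7) :=
  if i = 0 then 0 else ⟨i.val + 1, by have := i.val_lt; omega⟩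

def rNode (j : ZMod (k + 5)) : Fin (2 * k + 7) := if j = 0 then 1 else tCell j

lemma clrN_uNode (i : ZMod (k + 2)) :
    clrN (2 * k + 7) (uNode i) = univ \ {sCell (i + 1), sCell (i + 2)} := by
  have h1 : (i + 1).val = (i.val + 1) % (k + 2) := by simpa using ZMod.val_add_natCast i 1
  have h2 : (i + 2).val = (i.val + 2) % (k + 2) := by simpa using ZMod.val_add_natCast i 2
  have hlt := i.val_lt
  ext u
  simp only [clrN, show (2 * k + 7) / 2 = k + 3 by omega, mem_univ, mem_sdiff,
    mem_insert, mem_singleton, Fin.ext_iff, sCell, h1, h2, true_and]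
  by_cases hi : i = 0
  · subst hi; simp [uNode]
  · have hv : (uNode i).val = i.val + 1 := by simp [uNode, hi]
    have hi' : i.val ≠ 0 := by rwa [ne_eq, ZMod.val_eq_zero]
    rw [hv, if_pos (by omega), if_neg (by omega), Nat.add_sub_cancel]
    simp only [mem_filter, mem_univ, true_and, show k + 3 - 1 = k + 2 by omega, not_or]

lemma clrN_rNode (j : ZMod (k + 5)) :
    clrN (2 * k + 7) (rNode j) = univ \ {tCell (j - 1), tCell (j - 2)} := by
  have h1 : (j - 1).val = (j.val + (k + 4)) % (k + 5) := by
    simpa using ZMod.val_sub_natCast j (c := 1) (by omega)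
  have h2 : (j - 2).val = (j.val + (k + 3)) % (k + 5) := by
    simpa using ZMod.val_sub_natCast j (c := 2) (by omega)
  have hlt := j.val_lt
  ext u
  simp only [clrN, show (2 * k + 7) / 2 = k + 3 by omega, mem_univ, mem_sdiff,
    mem_insert, mem_singleton, Fin.ext_iff, tCell, h1, h2, true_and]
  by_cases hj : j = 0
  · subst hj; simp [rNode]
  · have hv : (rNode j).val = k + 2 + j.val := by simp [rNode, hj, tCell]
    have hj' : j.val ≠ 0 := by rwa [ne_eq, ZMod.val_eq_zero]
    rw [hv, if_neg (by omega), if_neg (by omega)]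
    simp only [mem_filter, mem_univ, true_and, not_or]
    rw [show k + 2 + j.val - (k + 3) + 1 + (k + 3 + 2) - 1 = j.val + (k + 4) by omega,
      show k + 2 + j.val - (k + 3) + 1 + (k + 3 + 2) - 2 = j.val + (k + 3) by omega]
    rfl

lemma uNode_val (i : ZMod (k + 2)) : (uNode i).val = if i.val = 0 then 0 else i.val + 1 := by
  simp only [uNode, ← ZMod.val_eq_zero]
  split_ifs <;> simp

lemma rNode_val (j : ZMod (k + 5)) : (rNode j).val = if j.val = 0 then 1 else k + 2 + j.val := by
  simp only [rNode, ← ZMod.val_eq_zero]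
  split_ifs <;> simp [tCell]

lemma uNode_zero : uNode (0 : ZMod (k + 2)) = sCell 0 := by
  ext; simp [uNode_val, sCell]

lemma rNode_zero : rNode (0 : ZMod (k + 5)) = sCell 1 := by
  ext
  simp [rNode_val, sCell, ZMod.val_one_eq_one_mod, Nat.mod_eq_of_lt (show 1 < k + 2 by omega)]

lemma rNode_of_ne_zero {j : ZMod (k + 5)} (hj : j ≠ 0) : rNode j = tCell j := if_neg hj

lemma sCell_injective : Injective (sCell (k := k)) :=
  fun i i' h => ZMod.val_injective _ (by simpa [sCell, Fin.ext_iff] using h)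

lemma tCell_injective : Injective (tCell (k := k)) :=
  fun j j' h => ZMod.val_injective _ (by simpa [tCell, Fin.ext_iff] using h)

lemma card_sum_eq :
    Fintype.card (ZMod (k + 2) ⊕ ZMod (k + 5)) = Fintype.card (Fin (2 * k + 7)) := by
  simp only [Fintype.card_sum, ZMod.card, Fintype.card_fin]
  ring

lemma bijective_cell : Bijective (Sum.elim (sCell (k := k)) tCell) := by
  refine (Fintype.bijective_iff_injective_and_card _).2 ⟨?_, card_sum_eq⟩
  refine sCell_injective.sumElim tCell_injective fun i j h => ?_
  have := i.val_lt
  simp only [sCell, tCell, Fin.ext_iff] at h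
  omega

lemma bijective_node : Bijective (Sum.elim (uNode (k := k)) rNode) := by
  refine (Fintype.bijective_iff_injective_and_card _).2 ⟨?_, card_sum_eq⟩
  refine Injective.sumElim (fun i i' h => ZMod.val_injective _ ?_)
    (fun j j' h => ZMod.val_injective _ ?_) fun i j h => absurd i.val_lt ?_
  all_goals
    simp only [Fin.ext_iff, uNode_val, rNode_val] at h
    split_ifs at h <;> omega

lemma card_fin_eq : Fintype.card (Fin (2 * k + 7)) = 2 * (k + 3) + 1 := by
  rw [Fintype.card_fin]; ring

lemma sCell_add_one_ne_add_two (i : ZMod (k + 2)) : sCell (i + 1) ≠ sCell (i + 2) := by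
  refine sCell_injective.ne fun h => ZMod.natCast_ne_natCast (L := k + 2) (c := 1) (d := 0)
    (by omega) (by omega) one_ne_zero ?_
  push_cast
  linear_combination h.symm

lemma tCell_sub_one_ne_sub_two (j : ZMod (k + 5)) : tCell (j - 1) ≠ tCell (j - 2) := by
  refine tCell_injective.ne fun h => ZMod.natCast_ne_natCast (L := k + 5) (c := 1) (d := 0)
    (by omega) (by omega) one_ne_zero ?_
  push_cast
  linear_combination h

abbrev clrStep (k : ℕ) : (Fin (2 * k + 7) → Bool) → Fin (2 * k + 7) → Bool :=
  majStep (clrN (2 * k + 7))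

variable {y : Fin (2 * k + 7) → Bool}

lemma clrStep_eq_true (hy : k + 5 ≤ ones y) : clrStep k y = fun _ => true := by
  funext v
  obtain ⟨i | j, rfl⟩ := bijective_node.surjective v
  · exact majStep_apply_eq_true card_fin_eq (sCell_add_one_ne_add_two i) (clrN_uNode i) hy
  · exact majStep_apply_eq_true card_fin_eq (tCell_sub_one_ne_sub_two j) (clrN_rNode j) hy

lemma clrStep_uNode (hy : ones y = k + 4) (i : ZMod (k + 2)) :
    clrStep k y (uNode i) = !(y (sCell (i + 1)) && y (sCell (i + 2))) :=
  majStep_apply_of_ones_eq card_fin_eq (sCell_add_one_ne_add_two i) (clrN_uNode i) hy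

lemma clrStep_rNode (hy : ones y = k + 4) (j : ZMod (k + 5)) :
    clrStep k y (rNode j) = !(y (tCell (j - 1)) && y (tCell (j - 2))) :=
  majStep_apply_of_ones_eq card_fin_eq (tCell_sub_one_ne_sub_two j) (clrN_rNode j) hy

lemma ones_eq_add (y : Fin (2 * k + 7) → Bool) :
    ones y = ones (y ∘ sCell) + ones (y ∘ tCell) :=
  card_filter_eq_add_of_bijective bijective_cell _

lemma zeros_clrStep (hy : ones y = k + 4) :
    zeros (clrStep k y) = pairCount (y ∘ sCell) + pairCount (y ∘ tCell) := by
  rw [zeros, card_filter_eq_add_of_bijective bijective_node,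
    ← pairCount_comp_add (y ∘ sCell) 1, ← pairCount_comp_add (y ∘ tCell) (-2)]
  congr 1
  · congr 1
    ext i
    simp [clrStep_uNode hy, add_assoc, one_add_one_eq_two]
  · congr 1
    ext j
    simp [clrStep_rNode hy, ← sub_eq_add_neg, show j + 1 - 2 = j - 1 by ring, and_comm]

lemma ones_clrStep_add_pairCount (hy : ones y = k + 4) :
    k + 4 + ones (y ∘ sCell) ≤ ones (clrStep k y) + pairCount (y ∘ sCell) := by
  have hz := zeros_clrStep hy
  have hsplit := ones_eq_add y
  have htot := ones_add_zeros (clrStep k y)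
  have hS := ones_add_zeros (y ∘ sCell)
  simp only [Fintype.card_fin, ZMod.card] at htot hS
  have hT : pairCount (y ∘ tCell) < ones (y ∘ tCell) := pairCount_lt_ones (by omega) (by omega)
  omega

lemma ones_clrStep_ge (hy : ones y = k + 4) : k + 4 ≤ ones (clrStep k y) := by
  have := ones_clrStep_add_pairCount hy
  have := pairCount_le_ones (y ∘ sCell)
  omega

lemma sCell_eq_of_ones_clrStep (hy : ones y = k + 4) (hFy : ones (clrStep k y) = k + 4)
    (i : ZMod (k + 2)) : y (sCell i) = y (sCell 0) := by
  have := ones_clrStep_add_pairCount hy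
  have hpair : pairCount (y ∘ sCell) = ones (y ∘ sCell) :=
    le_antisymm (pairCount_le_ones _) (by omega)
  exact apply_eq_of_pairCount_eq hpair i 0

lemma clrStep_sCell_zero (hy : ones y = k + 4) (hS : ∀ i, y (sCell i) = y (sCell 0)) :
    clrStep k y (sCell 0) = !y (sCell 0) := by
  have h := clrStep_uNode hy 0
  rwa [uNode_zero, hS (0 + 1), hS (0 + 2), Bool.and_self] at h

def lastPair (y : Fin (2 * k + 7) → Bool) : Bool := y (tCell (-1)) && y (tCell (-2))

lemma lastPair_eq_of_plateau (h0 : ones y = k + 4) (h1 : ones (clrStep k y) = k + 4)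
    (h2 : ones (clrStep k (clrStep k y)) = k + 4) : lastPair y = y (sCell 0) := by
  have hFS := sCell_eq_of_ones_clrStep h1 h2 1
  rw [clrStep_sCell_zero h0 (sCell_eq_of_ones_clrStep h0 h1), ← rNode_zero, clrStep_rNode h0]
    at hFS
  simpa only [lastPair, zero_sub] using Bool.not_inj hFS

/- If `S` is all `1`, the two ones of `T` are `T₋₁, T₋₂`, so `T₋₃ = 0`; if `S` is all `0`, the only
zero of `T` is `T₋₁` or `T₋₂`, so `T₋₃ = T₋₄ = 1`. -/
lemma lastPair_clrStep (hy : ones y = k + 4) (hS : ∀ i, y (sCell i) = y (sCell 0))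
    (hT : lastPair y = y (sCell 0)) : lastPair (clrStep k y) = y (sCell 0) := by
  have hne (c d : ℕ) (hc : c < 5) (hd : d < 5) (h : c ≠ d) : -(c : ZMod (k + 5)) ≠ -d := by
    rw [Ne, neg_inj]
    exact ZMod.natCast_ne_natCast (by omega) (by omega) h
  have h10 : (-1 : ZMod (k + 5)) ≠ 0 := by simpa using hne 1 0
  have h20 : (-2 : ZMod (k + 5)) ≠ 0 := by simpa using hne 2 0
  have h12 : (-1 : ZMod (k + 5)) ≠ -2 := by simpa using hne 1 2
  have h31 : (-3 : ZMod (k + 5)) ≠ -1 := by simpa using hne 3 1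
  have h32 : (-3 : ZMod (k + 5)) ≠ -2 := by simpa using hne 3 2
  have h41 : (-4 : ZMod (k + 5)) ≠ -1 := by simpa using hne 4 1
  have h42 : (-4 : ZMod (k + 5)) ≠ -2 := by simpa using hne 4 2
  rw [lastPair] at hT ⊢
  rw [← rNode_of_ne_zero h10, ← rNode_of_ne_zero h20, clrStep_rNode hy, clrStep_rNode hy,
    show (-1 : ZMod (k + 5)) - 1 = -2 by ring, show (-1 : ZMod (k + 5)) - 2 = -3 by ring,
    show (-2 : ZMod (k + 5)) - 1 = -3 by ring, show (-2 : ZMod (k + 5)) - 2 = -4 by ring]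
  have hsplit := ones_eq_add y
  have htot := ones_add_zeros (y ∘ tCell)
  simp only [ZMod.card] at htot
  cases hd : y (sCell 0)
  · have hS0 : y ∘ sCell = fun _ => false := funext fun i => (hS i).trans hd
    have hzeros : zeros (y ∘ tCell) ≤ 1 := by
      have : ones (y ∘ sCell) = 0 := by rw [hS0]; simp [ones, onesIn]
      omega
    rw [hd] at hT
    rcases Bool.and_eq_false_iff.1 hT with ha | ha
    · have h3 := eq_true_of_zeros_le_one (g := y ∘ tCell) hzeros ha h31
      have h4 := eq_true_of_zeros_le_one (g := y ∘ tCell) hzeros ha h41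
      simp_all
    · have h3 := eq_true_of_zeros_le_one (g := y ∘ tCell) hzeros ha h32
      have h4 := eq_true_of_zeros_le_one (g := y ∘ tCell) hzeros ha h42
      simp_all
  · have hS1 : y ∘ sCell = fun _ => true := funext fun i => (hS i).trans hd
    have hones : ones (y ∘ tCell) ≤ 2 := by
      have : ones (y ∘ sCell) = k + 2 := by rw [hS1]; simp [ones, onesIn]
      omega
    rw [hd, Bool.and_eq_true] at hT
    have h3 := eq_false_of_ones_le_two (g := y ∘ tCell) hones hT.1 hT.2 h12 h31 h32
    simp_all

lemma not_plateau (h0 : ones y = k + 4) (h1 : ones (clrStep k y) = k + 4)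
    (h2 : ones (clrStep k (clrStep k y)) = k + 4)
    (h3 : ones (clrStep k (clrStep k (clrStep k y))) = k + 4) : False := by
  -- `lastPair (clrStep k y)` must equal the flipped `S`-value, but `lastPair_clrStep` keeps it.
  have hS := sCell_eq_of_ones_clrStep h0 h1
  have hFy := lastPair_eq_of_plateau h1 h2 h3
  rw [clrStep_sCell_zero h0 hS, lastPair_clrStep h0 hS (lastPair_eq_of_plateau h0 h1 h2)]
    at hFy
  simp at hFy

lemma exists_iterate_ones_gt (hx : k + 4 ≤ ones y) :
    ∃ j ≤ 3, k + 4 < ones ((clrStep k)^[j] y) := by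
  by_contra! h
  have h0 : ones y = k + 4 := le_antisymm (h 0 (by norm_num)) hx
  have h1 := le_antisymm (h 1 (by norm_num)) (ones_clrStep_ge h0)
  have h2 := le_antisymm (h 2 (by norm_num)) (ones_clrStep_ge h1)
  have h3 := le_antisymm (h 3 (by norm_num)) (ones_clrStep_ge h2)
  exact not_plateau h0 h1 h2 h3

lemma iterate_clrStep_eq_true (hy : k + 4 ≤ ones y) : (clrStep k)^[4] y = fun _ => true := by
  obtain ⟨j, hj, hgt⟩ := exists_iterate_ones_gt hy
  have htrue : clrStep k (fun _ => true) = fun _ => true :=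
    clrStep_eq_true (by simp only [ones, onesIn, filter_true, card_univ, Fintype.card_fin]; omega)
  calc (clrStep k)^[4] y = (clrStep k)^[3 - j] (clrStep k ((clrStep k)^[j] y)) := by
        rw [← iterate_succ_apply' (clrStep k) j, ← iterate_add_apply]
        congr 1
        omega
    _ = fun _ => true := by rw [clrStep_eq_true hgt, iterate_fixed htrue]

end CLR

/-- the complementary-left-right network solves DCT,
converging within at most 4 iterations. -/
theorem stmt10 (n : ℕ) (hn : Odd n) (h7 : 7 ≤ n) :
    (∀ x : Fin n → Bool, zeros x < ones x →
      (majStep (clrN n))^[4] x = fun _ => true) ∧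
    (∀ x : Fin n → Bool, ones x < zeros x →
      (majStep (clrN n))^[4] x = fun _ => false) := by
  obtain ⟨k, rfl⟩ : ∃ k, n = 2 * k + 7 := by
    obtain ⟨m, rfl⟩ := hn
    exact ⟨m - 3, by omega⟩
  have majority_true (x : Fin (2 * k + 7) → Bool) (hx : zeros x < ones x) :
      (majStep (clrN (2 * k + 7)))^[4] x = fun _ => true := by
    have := ones_add_zeros x
    simp only [Fintype.card_fin] at this
    exact CLR.iterate_clrStep_eq_true (by omega)
  refine ⟨majority_true, fun x hx => ?_⟩
  have h := majority_true (fun v => !x v) (by rwa [ones_not, zeros_not])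
  rw [← (commute_not_majStep _).iterate_right 4 x] at h
  funext v
  simpa using congrFun h v
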